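/- Let b > 0 and y_M > 0, and let α : [0, y_M] → ℝ be differentiable with α(0) = 0 and (b/2)·y ≤ α′(y) ≤ (3b/2)·y for all y ∈ [0, y_M]. Then α is a strictly increasing bijection from [0, y_M] onto [0, α(y_M)], and its inverse β = α⁻¹ satisfies, for every X ∈ (0, α(y_M)], 0 < β′(X) ≤ √(3/(b·X)). -/

import Mathlib

/-!
Since `α' y ≥ b y / 2 > 0` for `y > 0`, `α` is strictly increasing and continuous, hence maps
`[0, yM]` bijectively onto `[0, α yM]`; its inverse `β` is monotone with an interval as image,
hence continuous, so `β' X = 1 / α' (β X)`. Integrating `α' y ≤ 3 b y / 2` gives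
`α y ≤ 3 b y² / 4`, so with `y = β X` we get `b X ≤ 3 (b y / 2)² ≤ 3 α'(y)²`,
which is `β' X ≤ √(3 / (b X))`.
-/

open Set Real Filter Topology

theorem HasDerivWithinAt.of_local_left_inverse {𝕜 : Type*} [NontriviallyNormedField 𝕜]
    {f g : 𝕜 → 𝕜} {f' a : 𝕜} {s t : Set 𝕜}
    (hg : Tendsto g (𝓝[s] a) (𝓝[t] (g a)))
    (hf : HasDerivWithinAt f f' t (g a)) (hf' : f' ≠ 0) (ha : a ∈ s)
    (hfg : ∀ᶠ x in 𝓝[s] a, f (g x) = x) : HasDerivWithinAt g f'⁻¹ s a :=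
  HasFDerivWithinAt.of_local_left_inverse
    (f' := ContinuousLinearEquiv.unitsEquivAut 𝕜 (Units.mk0 f' hf')) hg hf ha hfg

theorem StrictMonoOn.monotoneOn_of_rightInvOn {α β : Type*} [LinearOrder α] [Preorder β]
    {f : α → β} {g : β → α} {s : Set α} {t : Set β} (hf : StrictMonoOn f s)
    (hg : MapsTo g t s) (hfg : RightInvOn g f t) : MonotoneOn g t := by
  intro x hx y hy hxy
  by_contra! h
  have := hf (hg hy) (hg hx) h
  rw [hfg hx, hfg hy] at this
  exact this.not_ge hxy

theorem MonotoneOn.continuousOn_of_surjOn_Icc {α β : Type*} [LinearOrder α]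
    [TopologicalSpace α] [OrderTopology α] [LinearOrder β] [TopologicalSpace β]
    [OrderTopology β] [DenselyOrdered β] {g : α → β} {a b : α} (hab : a ≤ b)
    (hg : MonotoneOn g (Icc a b)) (hsurj : SurjOn g (Icc a b) (Icc (g a) (g b))) :
    ContinuousOn g (Icc a b) := by
  let G : α → Icc (g a) (g b) := fun x =>
    ⟨g (projIcc a b hab x), hg.image_Icc_subset (mem_image_of_mem g (projIcc a b hab x).2)⟩
  have hG : Continuous G := by
    refine Monotone.continuous_of_surjective (fun x y hxy => ?_) (fun y => ?_)
    · exact hg (projIcc a b hab x).2 (projIcc a b hab y).2 (monotone_projIcc hab hxy)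
    · obtain ⟨x, hx, hxy⟩ := hsurj y.2
      exact ⟨x, Subtype.ext (by simp [G, projIcc_of_mem hab hx, hxy])⟩
  refine (continuous_subtype_val.comp hG).continuousOn.congr fun x hx => ?_
  simp [G, projIcc_of_mem hab hx]

theorem strictMonoOn_Icc_of_hasDerivWithinAt_pos {f f' : ℝ → ℝ} {a b : ℝ}
    (hf : ∀ x ∈ Icc a b, HasDerivWithinAt f (f' x) (Icc a b) x)
    (hpos : ∀ x ∈ Ioo a b, 0 < f' x) : StrictMonoOn f (Icc a b) := by
  refine strictMonoOn_of_hasDerivWithinAt_pos (f' := f') (convex_Icc a b)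
    (fun x hx => (hf x hx).continuousWithinAt) (fun x hx => ?_) (fun x hx => ?_) <;>
    simp only [interior_Icc] at hx ⊢
  · exact (hf x (Ioo_subset_Icc_self hx)).mono Ioo_subset_Icc_self
  · exact hpos x hx

theorem StrictMonoOn.bijOn_Icc {α β : Type*} [ConditionallyCompleteLinearOrder α]
    [TopologicalSpace α] [OrderTopology α] [DenselyOrdered α] [LinearOrder β]
    [TopologicalSpace β] [OrderClosedTopology β] {f : α → β} {a b : α} (hab : a ≤ b)
    (hf : StrictMonoOn f (Icc a b)) (hcont : ContinuousOn f (Icc a b)) :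
    BijOn f (Icc a b) (Icc (f a) (f b)) := by
  simpa only [hcont.image_Icc_of_monotoneOn hab hf.monotoneOn] using hf.injOn.bijOn_image

theorem StrictMonoOn.hasDerivWithinAt_invFunOn_Icc {f : ℝ → ℝ} {f' a b X : ℝ}
    (hab : a ≤ b)
    (hf : StrictMonoOn f (Icc a b)) (hcont : ContinuousOn f (Icc a b))
    (hX : X ∈ Icc (f a) (f b))
    (hderiv : HasDerivWithinAt f f' (Icc a b) (Function.invFunOn f (Icc a b) X)) (hf' : f' ≠ 0) :
    HasDerivWithinAt (Function.invFunOn f (Icc a b)) f'⁻¹ (Icc (f a) (f b)) X := by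
  set g := Function.invFunOn f (Icc a b)
  have hbij := hf.bijOn_Icc hab hcont
  have hinv : InvOn g f (Icc a b) (Icc (f a) (f b)) := hbij.invOn_invFunOn
  have hmaps : MapsTo g (Icc (f a) (f b)) (Icc a b) := hbij.surjOn.mapsTo_invFunOn
  have hg_cont : ContinuousOn g (Icc (f a) (f b)) := by
    refine (hf.monotoneOn_of_rightInvOn hmaps hinv.2).continuousOn_of_surjOn_Icc
      (hf.monotoneOn ⟨le_rfl, hab⟩ ⟨hab, le_rfl⟩ hab) ?_
    rw [hinv.1 ⟨le_rfl, hab⟩, hinv.1 ⟨hab, le_rfl⟩]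
    exact (hinv.symm.bijOn hmaps hbij.mapsTo).surjOn
  exact HasDerivWithinAt.of_local_left_inverse ((hg_cont X hX).tendsto_nhdsWithin hmaps)
    hderiv hf' hX (eventually_nhdsWithin_of_forall fun x hx => hinv.2 hx)

theorem le_div_two_mul_sq_of_hasDerivWithinAt_le {f f' : ℝ → ℝ} {a c : ℝ} (hf0 : f 0 = 0)
    (hf : ∀ y ∈ Icc 0 a, HasDerivWithinAt f (f' y) (Icc 0 a) y)
    (hle : ∀ y ∈ Icc 0 a, f' y ≤ c * y) {y : ℝ} (hy : y ∈ Icc 0 a) :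
    f y ≤ c / 2 * y ^ 2 := by
  have hmono : MonotoneOn (fun t => c / 2 * t ^ 2 - f t) (Icc 0 a) := by
    refine monotoneOn_of_hasDerivWithinAt_nonneg (convex_Icc 0 a)
      ((continuousOn_const.mul (continuousOn_pow 2)).sub fun t ht => (hf t ht).continuousWithinAt)
      (f' := fun t => c * t - f' t) (fun t ht => ?_) (fun t ht => ?_) <;>
      simp only [interior_Icc] at ht ⊢
    · have hsq := (hasDerivWithinAt_pow (s := Ioo 0 a) 2 t).const_mul (c / 2)
      exact (hsq.sub ((hf t (Ioo_subset_Icc_self ht)).mono Ioo_subset_Icc_self)).congr_deriv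
        (by ring)
    · exact sub_nonneg.2 (hle t (Ioo_subset_Icc_self ht))
  have := hmono ⟨le_rfl, hy.1.trans hy.2⟩ hy hy.1
  simp only [hf0] at this
  linarith

theorem inv_le_sqrt_div {d k c : ℝ} (hd : 0 < d) (hk : 0 < k) (h : k ≤ c * d ^ 2) :
    d⁻¹ ≤ √(c / k) := by
  rw [Real.le_sqrt' (inv_pos.2 hd), le_div_iff₀ hk, inv_pow, inv_mul_le_iff₀ (by positivity)]
  linarith

theorem stmt_14 (b yM : ℝ) (hb : 0 < b) (hyM : 0 < yM)
    (α α' : ℝ → ℝ) (hα0 : α 0 = 0)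
    (hderiv : ∀ y ∈ Icc (0:ℝ) yM, HasDerivWithinAt α (α' y) (Icc (0:ℝ) yM) y)
    (hlow : ∀ y ∈ Icc (0:ℝ) yM, b / 2 * y ≤ α' y)
    (hhigh : ∀ y ∈ Icc (0:ℝ) yM, α' y ≤ 3 * b / 2 * y) :
    StrictMonoOn α (Icc 0 yM) ∧
    Set.BijOn α (Icc 0 yM) (Icc 0 (α yM)) ∧
    ∃ β : ℝ → ℝ,
      (∀ y ∈ Icc (0:ℝ) yM, β (α y) = y) ∧
      (∀ X ∈ Icc (0:ℝ) (α yM), α (β X) = X) ∧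
      ∀ X ∈ Ioc (0:ℝ) (α yM), ∃ d : ℝ,
        HasDerivWithinAt β d (Icc (0:ℝ) (α yM)) X ∧
        0 < d ∧ d ≤ Real.sqrt (3 / (b * X)) := by
  have hderiv_pos : ∀ y ∈ Ioc 0 yM, 0 < α' y := fun y hy =>
    (mul_pos (half_pos hb) hy.1).trans_le (hlow y (Ioc_subset_Icc_self hy))
  have hcont : ContinuousOn α (Icc 0 yM) := fun y hy => (hderiv y hy).continuousWithinAt
  have hmono : StrictMonoOn α (Icc 0 yM) := strictMonoOn_Icc_of_hasDerivWithinAt_pos hderiv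
    fun y hy => hderiv_pos y (Ioo_subset_Ioc_self hy)
  have hbij := hmono.bijOn_Icc hyM.le hcont
  rw [hα0] at hbij
  have hinv := hbij.invOn_invFunOn
  refine ⟨hmono, hbij, Function.invFunOn α (Icc 0 yM), fun y hy => hinv.1 hy,
    fun X hX => hinv.2 hX, fun X hX => ?_⟩
  set y := Function.invFunOn α (Icc 0 yM) X
  have hXmem : X ∈ Icc 0 (α yM) := Ioc_subset_Icc_self hX
  have hy : y ∈ Icc 0 yM := hbij.surjOn.mapsTo_invFunOn hXmem
  have hαy : α y = X := hinv.2 hXmem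
  have hy0 : y ≠ 0 := fun h => hX.1.ne' (by rw [← hαy, h, hα0])
  have hpos : 0 < α' y := hderiv_pos y ⟨lt_of_le_of_ne hy.1 (Ne.symm hy0), hy.2⟩
  have hX_le : X ≤ 3 * b / 2 / 2 * y ^ 2 :=
    hαy ▸ le_div_two_mul_sq_of_hasDerivWithinAt_le hα0 hderiv hhigh hy
  refine ⟨(α' y)⁻¹, ?_, inv_pos.2 hpos, inv_le_sqrt_div hpos (mul_pos hb hX.1) ?_⟩
  · simpa only [hα0] using hmono.hasDerivWithinAt_invFunOn_Icc hyM.le hcont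
      (by rwa [hα0]) (hderiv y hy) hpos.ne'
  · have hsq := pow_le_pow_left₀ (mul_nonneg (half_pos hb).le hy.1) (hlow y hy) 2
    nlinarith [mul_le_mul_of_nonneg_left hX_le hb.le]
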